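/- arXiv:2108.11103 — 2 statements merged into one kernel-verified Lean document; each statement's English description precedes it below -/
import Mathlib

section
/- Let A be a complete filtered algebra over a field K of characteristic zero, R : A → A a K-linear map preserving the filtration, R̃ := id_A − R, and let χ : A₁ → A₁ be the unique map with (χ − id)(Aₙ) ⊆ A₂ₙ for all n ≥ 1 and exp(R(χ(x)))·exp(R̃(χ(x))) = exp(x) for all x ∈ A₁. Then χ satisfies the simplified recursion χ(x) = R(χ(x)) + log(exp(−R(χ(x)))·exp(x)) for all x ∈ A₁. -/
open scoped Classical

/-- A complete filtered algebra over a field `K` of characteristic zero: an associative unital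
`K`-algebra `A` with a decreasing filtration `A = F 0 ⊇ F 1 ⊇ ⋯` by (two-sided, here
`K`-submodules closed under multiplication in the filtered sense) ideals, which is separated
and complete: every series `Σ aₙ` with `aₙ ∈ F n` converges (has a limit in the filtration
topology). -/
structure CompleteFilteredAlgebra (K A : Type*) [Field K] [CharZero K] [Ring A] [Algebra K A] where
  F : ℕ → Submodule K A
  F_zero : F 0 = ⊤
  F_succ_le : ∀ n : ℕ, F (n + 1) ≤ F n
  F_mul : ∀ m n : ℕ, ∀ x ∈ F m, ∀ y ∈ F n, x * y ∈ F (m + n)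
  F_sep : ∀ x : A, (∀ n : ℕ, x ∈ F n) → x = 0
  F_complete : ∀ a : ℕ → A, (∀ n : ℕ, a n ∈ F n) →
    ∃ s : A, ∀ N : ℕ, s - ∑ n ∈ Finset.range N, a n ∈ F N

namespace CompleteFilteredAlgebra

variable {K A : Type*} [Field K] [CharZero K] [Ring A] [Algebra K A]

/-- The exponential `exp x = Σ_{n≥0} xⁿ/n!`, defined (as the limit of its partial sums) for
every `x ∈ F 1`; junk value `0` elsewhere. -/
noncomputable def exp (FA : CompleteFilteredAlgebra K A) (x : A) : A :=
  if h : ∀ n : ℕ, ((n.factorial : K)⁻¹ • x ^ n) ∈ FA.F n then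
    Classical.choose (FA.F_complete _ h)
  else 0

/-- The logarithm `log (1 + y) = Σ_{n≥1} (-1)^(n-1) yⁿ/n`, defined (as the limit of its partial
sums) whenever the argument lies in `1 + F 1`; junk value `0` elsewhere. (The `n = 0` term of
the defining sequence is `0` since `1/0 = 0` in `K`.) -/
noncomputable def log (FA : CompleteFilteredAlgebra K A) (y : A) : A :=
  if h : ∀ n : ℕ, ((((-1 : K) ^ (n - 1)) / (n : K)) • (y - 1) ^ n) ∈ FA.F n then
    Classical.choose (FA.F_complete _ h)
  else 0

end CompleteFilteredAlgebra

/-!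
Both `exp (-u) * exp u = 1` and `log (exp w) = w` are checked modulo every `F N`. For `w ∈ F 1`,
`aeval w` maps `X ^ N * K[X]` into `F N`, and `exp`, `log` agree modulo `F N` with the truncations
of the exponential and logarithmic series, so both identities reduce to congruences modulo `X ^ N`
between polynomials. These follow by differentiating: in characteristic zero a polynomial without
constant term whose derivative is divisible by `X ^ M` is divisible by `X ^ (M + 1)`, and the
derivative of the truncated exponential is the exponential truncated one degree lower.
The recursion itself is then `exp (-R χ x) * exp x = exp (χ x - R χ x)`, followed by `log`.
-/

namespace Polynomial

open PowerSeries (trunc exp log trunc_derivative)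

theorem X_pow_succ_dvd_of_X_pow_dvd_derivative {R : Type*} [Semiring R] [IsAddTorsionFree R]
    {f : R[X]} {M : ℕ} (h0 : f.coeff 0 = 0) (h : X ^ M ∣ derivative f) : X ^ (M + 1) ∣ f := by
  rw [X_pow_dvd_iff] at h ⊢
  rintro (_ | k) hk
  · exact h0
  · have := h k (by omega)
    rw [coeff_derivative, ← Nat.cast_succ, ← nsmul_eq_mul'] at this
    exact (nsmul_eq_zero_iff.mp this).resolve_right k.succ_ne_zero

theorem X_pow_dvd_comp {R : Type*} [CommSemiring R] {p q : R[X]} {M : ℕ}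
    (hp : X ^ M ∣ p) (hq : X ∣ q) : X ^ M ∣ p.comp q := by
  obtain ⟨r, rfl⟩ := hp
  rw [mul_comp, X_pow_comp]
  exact (pow_dvd_pow_of_dvd hq M).mul_right _

theorem X_pow_dvd_trunc_succ_sub_trunc {R : Type*} [Ring R] (f : PowerSeries R) (M : ℕ) :
    X ^ M ∣ trunc (M + 1) f - trunc M f := by
  rw [PowerSeries.trunc_succ, add_sub_cancel_left, ← C_mul_X_pow_eq_monomial]
  exact ⟨_, X_pow_mul.symm⟩

section RatAlgebra

variable {R : Type*} [CommRing R] [Algebra ℚ R]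

theorem eval_trunc_exp_zero (M : ℕ) : (trunc (M + 1) (exp R)).eval 0 = 1 := by
  simp [← coeff_zero_eq_eval_zero, PowerSeries.coeff_trunc]

theorem derivative_trunc_exp (M : ℕ) :
    derivative (trunc (M + 1) (exp R)) = trunc M (exp R) := by
  rw [← trunc_derivative, PowerSeries.derivative_exp]

theorem derivative_trunc_log_comp (M : ℕ) (q : R[X]) :
    (derivative (trunc (M + 1) (log R))).comp q = ∑ k ∈ Finset.range M, (-q) ^ k := by
  rw [← trunc_derivative, PowerSeries.deriv_log, comp, PowerSeries.eval₂_trunc_eq_sum_range]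
  refine Finset.sum_congr rfl fun k _ => ?_
  rw [PowerSeries.coeff_mk, neg_pow q]
  simp

end RatAlgebra

variable {K : Type*} [Field K] [CharZero K]

theorem X_pow_dvd_trunc_exp_comp_neg_X_mul_trunc_exp_sub_one (N : ℕ) :
    X ^ N ∣ (trunc N (exp K)).comp (-X) * trunc N (exp K) - 1 := by
  rcases N with _ | M
  · simp
  apply X_pow_succ_dvd_of_X_pow_dvd_derivative
  · simp [coeff_zero_eq_eval_zero, eval_trunc_exp_zero]
  · set d := trunc (M + 1) (exp K) - trunc M (exp K)
    have hd : X ^ M ∣ d := X_pow_dvd_trunc_succ_sub_trunc _ M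
    have hd' : X ^ M ∣ d.comp (-X) := X_pow_dvd_comp hd (by simp)
    have : derivative ((trunc (M + 1) (exp K)).comp (-X) * trunc (M + 1) (exp K) - 1)
        = d.comp (-X) * trunc M (exp K) - (trunc M (exp K)).comp (-X) * d := by
      simp only [derivative_sub, derivative_mul, derivative_comp, derivative_trunc_exp,
        derivative_one, derivative_neg, derivative_X, d, sub_comp]
      ring
    rw [this]
    exact dvd_sub (hd'.mul_right _) (hd.mul_left _)

theorem X_pow_dvd_trunc_log_comp_trunc_exp_sub_one_sub_X (N : ℕ) :
    X ^ N ∣ (trunc N (log K)).comp (trunc N (exp K) - 1) - X := by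
  rcases N with _ | M
  · simp
  set q := trunc (M + 1) (exp K) - 1
  have hq : X ∣ q := by
    simp [q, X_dvd_iff, PowerSeries.coeff_trunc]
  apply X_pow_succ_dvd_of_X_pow_dvd_derivative
  · rw [coeff_sub, coeff_X_zero, sub_zero, coeff_zero_eq_eval_zero, eval_comp]
    simp [q, ← coeff_zero_eq_eval_zero, PowerSeries.coeff_trunc]
  · set d := trunc (M + 1) (exp K) - trunc M (exp K)
    have hd : X ^ M ∣ d := X_pow_dvd_trunc_succ_sub_trunc _ M
    have : derivative ((trunc (M + 1) (log K)).comp q - X)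
        = -(-q) ^ M - d * ∑ k ∈ Finset.range M, (-q) ^ k := by
      rw [derivative_sub, derivative_comp, derivative_trunc_log_comp, derivative_X]
      have : derivative q = (1 - -q) - d := by
        simp only [q, d, derivative_sub, derivative_one, derivative_trunc_exp]; ring
      rw [this, sub_mul, mul_neg_geom_sum]
      ring
    rw [this]
    exact dvd_sub (dvd_neg.mpr ((pow_dvd_pow_of_dvd (dvd_neg.mpr hq) M))) (hd.mul_right _)

end Polynomial

namespace CompleteFilteredAlgebra

open Polynomial
open PowerSeries (trunc)

variable {K A : Type*} [Field K] [CharZero K] [Ring A] [Algebra K A]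
  (FA : CompleteFilteredAlgebra K A)

theorem mem_F_zero (x : A) : x ∈ FA.F 0 := by
  rw [FA.F_zero]
  trivial

theorem mul_mem_left {n : ℕ} (x : A) {y : A} (hy : y ∈ FA.F n) : x * y ∈ FA.F n := by
  simpa using FA.F_mul 0 n x (FA.mem_F_zero x) y hy

theorem mul_mem_right {n : ℕ} {x : A} (hx : x ∈ FA.F n) (y : A) : x * y ∈ FA.F n := by
  simpa using FA.F_mul n 0 x hx y (FA.mem_F_zero y)

theorem pow_mem {x : A} (hx : x ∈ FA.F 1) (n : ℕ) : x ^ n ∈ FA.F n := by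
  induction n with
  | zero => simpa using FA.mem_F_zero 1
  | succ n ih => simpa [pow_succ] using FA.F_mul n 1 _ ih x hx

theorem eq_of_forall_smodEq {a b : A} (h : ∀ N, a ≡ b [SMOD FA.F N]) : a = b :=
  sub_eq_zero.mp (FA.F_sep _ fun N => SModEq.sub_mem.mp (h N))

theorem smodEq_mul {N : ℕ} {a a' b b' : A} (ha : a ≡ a' [SMOD FA.F N])
    (hb : b ≡ b' [SMOD FA.F N]) : a * b ≡ a' * b' [SMOD FA.F N] := by
  rw [SModEq.sub_mem] at *
  have : a * b - a' * b' = (a - a') * b + a' * (b - b') := by noncomm_ring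
  rw [this]
  exact add_mem (FA.mul_mem_right ha b) (FA.mul_mem_left a' hb)

theorem smodEq_pow {N : ℕ} {a b : A} (h : a ≡ b [SMOD FA.F N]) (n : ℕ) :
    a ^ n ≡ b ^ n [SMOD FA.F N] := by
  induction n with
  | zero => simp only [pow_zero, SModEq.rfl]
  | succ n ih => simpa only [pow_succ] using FA.smodEq_mul ih h

theorem aeval_smodEq {N : ℕ} {a b : A} (h : a ≡ b [SMOD FA.F N]) (p : K[X]) :
    aeval a p ≡ aeval b p [SMOD FA.F N] := by
  simp only [aeval_eq_sum_range]
  exact SModEq.sum fun i _ => (FA.smodEq_pow h i).smul _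

theorem aeval_mem_of_X_pow_dvd {w : A} (hw : w ∈ FA.F 1) {N : ℕ} {p : K[X]}
    (hp : X ^ N ∣ p) : aeval w p ∈ FA.F N := by
  obtain ⟨r, rfl⟩ := hp
  rw [map_mul, map_pow, aeval_X]
  exact FA.mul_mem_right (FA.pow_mem hw N) _

theorem aeval_smodEq_of_X_pow_dvd_sub {w : A} (hw : w ∈ FA.F 1) {N : ℕ} {p q : K[X]}
    (h : X ^ N ∣ p - q) : aeval w p ≡ aeval w q [SMOD FA.F N] := by
  rw [SModEq.sub_mem, ← map_sub]
  exact FA.aeval_mem_of_X_pow_dvd hw h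

theorem exp_smodEq_aeval_trunc {x : A} (hx : x ∈ FA.F 1) (N : ℕ) :
    FA.exp x ≡ aeval x (trunc N (PowerSeries.exp K)) [SMOD FA.F N] := by
  have hterm : ∀ n, ((n.factorial : K)⁻¹ • x ^ n) ∈ FA.F n :=
    fun n => Submodule.smul_mem _ _ (FA.pow_mem hx n)
  rw [CompleteFilteredAlgebra.exp, dif_pos hterm, SModEq.sub_mem, aeval_def,
    PowerSeries.eval₂_trunc_eq_sum_range]
  simpa [Algebra.smul_def] using Classical.choose_spec (FA.F_complete _ hterm) N

theorem log_smodEq_aeval_trunc {y : A} (hy : y - 1 ∈ FA.F 1) (N : ℕ) :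
    FA.log y ≡ aeval (y - 1) (trunc N (PowerSeries.log K)) [SMOD FA.F N] := by
  have hterm : ∀ n, ((((-1 : K) ^ (n - 1)) / (n : K)) • (y - 1) ^ n) ∈ FA.F n :=
    fun n => Submodule.smul_mem _ _ (FA.pow_mem hy n)
  rw [CompleteFilteredAlgebra.log, dif_pos hterm, SModEq.sub_mem, aeval_def,
    PowerSeries.eval₂_trunc_eq_sum_range]
  convert Classical.choose_spec (FA.F_complete _ hterm) N using 3 with n
  -- the `n = 0` terms agree only because `(0 : K)⁻¹ = 0`
  rcases n with _ | n
  · simp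
  · simp [Algebra.smul_def, pow_succ]

theorem exp_sub_one_mem {x : A} (hx : x ∈ FA.F 1) : FA.exp x - 1 ∈ FA.F 1 := by
  simpa [SModEq.sub_mem] using FA.exp_smodEq_aeval_trunc hx 1

theorem exp_neg_mul_exp {u : A} (hu : u ∈ FA.F 1) : FA.exp (-u) * FA.exp u = 1 := by
  refine FA.eq_of_forall_smodEq fun N => ?_
  set e := trunc N (PowerSeries.exp K)
  calc FA.exp (-u) * FA.exp u
      ≡ aeval (-u) e * aeval u e [SMOD FA.F N] :=
        FA.smodEq_mul (FA.exp_smodEq_aeval_trunc (neg_mem hu) N) (FA.exp_smodEq_aeval_trunc hu N)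
    _ = aeval u (e.comp (-X) * e) := by rw [map_mul, aeval_comp, map_neg, aeval_X]
    _ ≡ aeval u 1 [SMOD FA.F N] :=
        FA.aeval_smodEq_of_X_pow_dvd_sub hu (X_pow_dvd_trunc_exp_comp_neg_X_mul_trunc_exp_sub_one N)
    _ = 1 := map_one _

theorem log_exp {w : A} (hw : w ∈ FA.F 1) : FA.log (FA.exp w) = w := by
  refine FA.eq_of_forall_smodEq fun N => ?_
  set e := trunc N (PowerSeries.exp K)
  set ℓ := trunc N (PowerSeries.log K)
  have hexp : FA.exp w - 1 ≡ aeval w (e - 1) [SMOD FA.F N] := by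
    rw [map_sub, map_one]
    exact (FA.exp_smodEq_aeval_trunc hw N).sub SModEq.rfl
  calc FA.log (FA.exp w)
      ≡ aeval (FA.exp w - 1) ℓ [SMOD FA.F N] :=
        FA.log_smodEq_aeval_trunc (FA.exp_sub_one_mem hw) N
    _ ≡ aeval (aeval w (e - 1)) ℓ [SMOD FA.F N] := FA.aeval_smodEq hexp ℓ
    _ = aeval w (ℓ.comp (e - 1)) := (aeval_comp w).symm
    _ ≡ aeval w X [SMOD FA.F N] :=
        FA.aeval_smodEq_of_X_pow_dvd_sub hw (X_pow_dvd_trunc_log_comp_trunc_exp_sub_one_sub_X N)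
    _ = w := aeval_X w

end CompleteFilteredAlgebra

theorem bch_recursion_simplified_general {K A : Type*} [Field K] [CharZero K]
    [Ring A] [Algebra K A] (FA : CompleteFilteredAlgebra K A) (R : A →ₗ[K] A)
    (hR : ∀ n : ℕ, ∀ x ∈ FA.F n, R x ∈ FA.F n)
    (χ : FA.F 1 → FA.F 1)
    (hfact : ∀ x : FA.F 1,
      FA.exp (R (χ x)) * FA.exp ((χ x : A) - R (χ x)) = FA.exp (x : A)) :
    ∀ x : FA.F 1,
      (χ x : A) = R (χ x) + FA.log (FA.exp (-(R (χ x))) * FA.exp (x : A)) := by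
  intro x
  have hu : R (χ x) ∈ FA.F 1 := hR 1 _ (χ x).2
  have hsplit : FA.exp (-(R (χ x))) * FA.exp (x : A) = FA.exp ((χ x : A) - R (χ x)) := by
    rw [← hfact x, ← mul_assoc, FA.exp_neg_mul_exp hu, one_mul]
  rw [hsplit, FA.log_exp (sub_mem (χ x).2 hu), add_sub_cancel]

/-- For a complete filtered algebra `A` over a field `K` of characteristic zero,
a filtration-preserving `K`-linear map `R`, `R̃ := id - R`, and the (unique) map `χ : A₁ → A₁`
with `(χ - id)(Aₙ) ⊆ A₂ₙ` and `exp(R(χ x)) * exp(R̃(χ x)) = exp x`, the map `χ` satisfies the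
simplified recursion `χ(x) = R(χ(x)) + log(exp(-R(χ(x))) * exp(x))`. -/
theorem bch_recursion_simplified {K A : Type*} [Field K] [CharZero K]
    [Ring A] [Algebra K A] (FA : CompleteFilteredAlgebra K A) (R : A →ₗ[K] A)
    (hR : ∀ n : ℕ, ∀ x ∈ FA.F n, R x ∈ FA.F n)
    (χ : FA.F 1 → FA.F 1)
    (hdev : ∀ n : ℕ, 1 ≤ n → ∀ x : FA.F 1, (x : A) ∈ FA.F n →
      ((χ x : A) - (x : A)) ∈ FA.F (2 * n))
    (hfact : ∀ x : FA.F 1,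
      FA.exp (R (χ x)) * FA.exp ((χ x : A) - R (χ x)) = FA.exp (x : A)) :
    ∀ x : FA.F 1,
      (χ x : A) = R (χ x) + FA.log (FA.exp (-(R (χ x))) * FA.exp (x : A)) :=
  bch_recursion_simplified_general FA R hR χ hfact
end

section
/- Let (A, R) be a complete filtered Rota–Baxter algebra of weight λ ≠ 0 over a field K of characteristic zero, and set R̃ := −λ·id_A − R. Then there exists a unique map χ_λ : A₁ → A₁ such that (χ_λ − id)(Aₙ) ⊆ A₂ₙ for all n ≥ 1 and the exponential factorization exp(R(χ_λ(x)))·exp(R̃(χ_λ(x))) = exp(−λx) holds for all x ∈ A₁. -/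
open scoped Classical

namespace CompleteFilteredAlgebra

variable {K A : Type*} [Field K] [CharZero K] [Ring A] [Algebra K A]

lemma F_antitone (FA : CompleteFilteredAlgebra K A) : Antitone FA.F :=
  antitone_nat_of_succ_le FA.F_succ_le

lemma memF (FA : CompleteFilteredAlgebra K A) {x : A} {k j : ℕ} (h : x ∈ FA.F k)
    (hk : j ≤ k) : x ∈ FA.F j := FA.F_antitone hk h

lemma memTop (FA : CompleteFilteredAlgebra K A) (x : A) : x ∈ FA.F 0 := by
  rw [FA.F_zero]; exact Submodule.mem_top

lemma sub_sep (FA : CompleteFilteredAlgebra K A) {x y : A}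
    (h : ∀ n : ℕ, x - y ∈ FA.F n) : x = y :=
  sub_eq_zero.mp (FA.F_sep _ h)

lemma pow_mem_s12 (FA : CompleteFilteredAlgebra K A) {n : ℕ} {a : A} (ha : a ∈ FA.F n) :
    ∀ k : ℕ, a ^ k ∈ FA.F (k * n)
  | 0 => by simpa using FA.memTop 1
  | (k+1) => by
      have := FA.F_mul (k*n) n _ (FA.pow_mem_s12 ha k) _ ha
      rw [pow_succ]
      exact FA.memF this (le_of_eq (by ring))

lemma exp_cond (FA : CompleteFilteredAlgebra K A) {x : A} (hx : x ∈ FA.F 1) :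
    ∀ n : ℕ, ((n.factorial : K)⁻¹ • x ^ n) ∈ FA.F n := fun n =>
  Submodule.smul_mem _ _ (FA.memF (FA.pow_mem_s12 hx n) (by omega))

lemma exp_spec (FA : CompleteFilteredAlgebra K A) {x : A}
    (h : ∀ n : ℕ, ((n.factorial : K)⁻¹ • x ^ n) ∈ FA.F n) :
    ∀ N : ℕ, FA.exp x - ∑ n ∈ Finset.range N, (n.factorial : K)⁻¹ • x ^ n ∈ FA.F N := by
  rw [exp, dif_pos h]
  exact Classical.choose_spec (FA.F_complete _ h)

lemma exp_zero (FA : CompleteFilteredAlgebra K A) : FA.exp (0 : A) = 1 := by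
  have h : ∀ n : ℕ, ((n.factorial : K)⁻¹ • (0:A) ^ n) ∈ FA.F n := by
    intro n
    cases n with
    | zero => simpa using FA.memTop 1
    | succ n => simp [zero_pow]
  apply FA.sub_sep
  intro N
  have := FA.exp_spec h (N+1)
  have hsum : ∑ n ∈ Finset.range (N+1), ((n.factorial : K)⁻¹ • (0:A) ^ n) = 1 := by
    rw [Finset.sum_eq_single 0]
    · simp
    · intro b _ hb
      simp [zero_pow hb]
    · simp
  rw [hsum] at this
  exact FA.memF this (by omega)

lemma pow_sub_mem (FA : CompleteFilteredAlgebra K A) {n m : ℕ} {a a' : A}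
    (ha : a ∈ FA.F n) (ha' : a' ∈ FA.F n) (hd : a - a' ∈ FA.F m) :
    ∀ k : ℕ, a ^ (k+1) - a' ^ (k+1) ∈ FA.F (m + k * n)
  | 0 => by simpa using hd
  | (k+1) => by
      have ih := FA.pow_sub_mem ha ha' hd k
      have h1 : a * (a ^ (k+1) - a' ^ (k+1)) ∈ FA.F (n + (m + k * n)) :=
        FA.F_mul _ _ _ ha _ ih
      have h2 : (a - a') * a' ^ (k+1) ∈ FA.F (m + (k+1) * n) :=
        FA.F_mul _ _ _ hd _ (FA.pow_mem_s12 ha' (k+1))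
      have key : a ^ (k+2) - a' ^ (k+2)
          = a * (a ^ (k+1) - a' ^ (k+1)) + (a - a') * a' ^ (k+1) := by
        rw [pow_succ' a (k+1), pow_succ' a' (k+1)]
        generalize a ^ (k+1) = X
        generalize a' ^ (k+1) = Y
        noncomm_ring
      rw [key]
      exact Submodule.add_mem _ (FA.memF h1 (le_of_eq (by ring)))
        (FA.memF h2 (le_of_eq rfl))

/-- Main exp difference estimate. -/
lemma exp_sub_est (FA : CompleteFilteredAlgebra K A) {n m : ℕ} (hn : 1 ≤ n) (hnm : n ≤ m)
    {a a' : A} (ha : a ∈ FA.F n) (ha' : a' ∈ FA.F n) (hd : a - a' ∈ FA.F m) :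
    FA.exp a - FA.exp a' - (a - a') ∈ FA.F (m + n) := by
  have ha1 : a ∈ FA.F 1 := FA.memF ha hn
  have ha'1 : a' ∈ FA.F 1 := FA.memF ha' hn
  set N := m + n with hN
  have h1 := FA.exp_spec (FA.exp_cond ha1) N
  have h2 := FA.exp_spec (FA.exp_cond ha'1) N
  have hT : (∑ k ∈ Finset.range N, (k.factorial : K)⁻¹ • a ^ k)
      - (∑ k ∈ Finset.range N, (k.factorial : K)⁻¹ • a' ^ k) - (a - a') ∈ FA.F N := by
    rw [← Finset.sum_sub_distrib]
    have hterm : ∀ k ∈ Finset.range N,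
        ((k.factorial : K)⁻¹ • a ^ k - (k.factorial : K)⁻¹ • a' ^ k)
        = (k.factorial : K)⁻¹ • (a ^ k - a' ^ k) := by
      intro k _; rw [smul_sub]
    rw [Finset.sum_congr rfl hterm]
    have h1mem : 1 ∈ Finset.range N := Finset.mem_range.mpr (by omega)
    have := Finset.add_sum_erase (Finset.range N)
      (fun k => (k.factorial : K)⁻¹ • (a ^ k - a' ^ k)) h1mem
    simp only [Nat.factorial_one, pow_one, Nat.cast_one, inv_one, one_smul] at this
    have heq : (∑ k ∈ Finset.range N, (k.factorial : K)⁻¹ • (a ^ k - a' ^ k)) - (a - a')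
        = ∑ k ∈ (Finset.range N).erase 1, (k.factorial : K)⁻¹ • (a ^ k - a' ^ k) := by
      rw [← this]; abel
    rw [heq]
    apply Submodule.sum_mem
    intro k hk
    rcases Finset.mem_erase.mp hk with ⟨hk1, _⟩
    apply Submodule.smul_mem
    rcases Nat.eq_zero_or_pos k with h0 | hpos
    · subst h0; simpa using Submodule.zero_mem _
    · obtain ⟨j, rfl⟩ : ∃ j, k = j + 1 := ⟨k - 1, by omega⟩
      have := FA.pow_sub_mem ha ha' hd j
      refine FA.memF this ?_
      have hj : 1 ≤ j := by omega
      calc N = m + n := hN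
        _ ≤ m + j * n := by nlinarith
  have key : FA.exp a - FA.exp a' - (a - a')
      = (FA.exp a - ∑ k ∈ Finset.range N, (k.factorial : K)⁻¹ • a ^ k)
        - (FA.exp a' - ∑ k ∈ Finset.range N, (k.factorial : K)⁻¹ • a' ^ k)
        + ((∑ k ∈ Finset.range N, (k.factorial : K)⁻¹ • a ^ k)
          - (∑ k ∈ Finset.range N, (k.factorial : K)⁻¹ • a' ^ k) - (a - a')) := by abel
  rw [key]
  exact Submodule.add_mem _ (Submodule.sub_mem _ h1 h2) hT

lemma exp_one_est (FA : CompleteFilteredAlgebra K A) {n : ℕ} (hn : 1 ≤ n) {a : A}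
    (ha : a ∈ FA.F n) : FA.exp a - 1 - a ∈ FA.F (2 * n) := by
  have := FA.exp_sub_est hn le_rfl ha (Submodule.zero_mem _) (by simpa using ha)
  rw [FA.exp_zero, sub_zero] at this
  exact FA.memF this (by omega)

lemma exp_one_mem (FA : CompleteFilteredAlgebra K A) {n : ℕ} (hn : 1 ≤ n) {a : A}
    (ha : a ∈ FA.F n) : FA.exp a - 1 ∈ FA.F n := by
  have h := FA.exp_one_est hn ha
  have : FA.exp a - 1 = (FA.exp a - 1 - a) + a := by abel
  rw [this]
  exact Submodule.add_mem _ (FA.memF h (by omega)) ha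

lemma prod_est (FA : CompleteFilteredAlgebra K A) {n : ℕ} (hn : 1 ≤ n) {a b : A}
    (ha : a ∈ FA.F n) (hb : b ∈ FA.F n) :
    FA.exp a * FA.exp b - 1 - a - b ∈ FA.F (2 * n) := by
  have he := FA.exp_one_est hn ha
  have hf := FA.exp_one_est hn hb
  have key : FA.exp a * FA.exp b - 1 - a - b
      = a * b + a * (FA.exp b - 1 - b) + (FA.exp a - 1 - a) * FA.exp b
        + (FA.exp b - 1 - b) := by noncomm_ring
  rw [key]
  refine Submodule.add_mem _ (Submodule.add_mem _ (Submodule.add_mem _ ?_ ?_) ?_) hf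
  · exact FA.memF (FA.F_mul n n _ ha _ hb) (by omega)
  · exact FA.memF (FA.F_mul n (2*n) _ ha _ hf) (by omega)
  · exact FA.memF (FA.F_mul (2*n) 0 _ he _ (FA.memTop _)) (by omega)

lemma prod_diff_est (FA : CompleteFilteredAlgebra K A) {n m : ℕ} (hn : 1 ≤ n) (hnm : n ≤ m)
    {a a' b b' : A} (ha : a ∈ FA.F n) (ha' : a' ∈ FA.F n) (hb : b ∈ FA.F n) (hb' : b' ∈ FA.F n)
    (hda : a - a' ∈ FA.F m) (hdb : b - b' ∈ FA.F m) :
    FA.exp a * FA.exp b - FA.exp a' * FA.exp b' - (a - a') - (b - b') ∈ FA.F (m + n) := by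
  have hg := FA.exp_sub_est hn hnm ha ha' hda
  have hh := FA.exp_sub_est hn hnm hb hb' hdb
  have key : FA.exp a * FA.exp b - FA.exp a' * FA.exp b' - (a - a') - (b - b')
      = (FA.exp a - FA.exp a' - (a - a')) * FA.exp b + (a - a') * (FA.exp b - 1)
        + (FA.exp a' - 1) * (b - b') + FA.exp a' * (FA.exp b - FA.exp b' - (b - b')) := by noncomm_ring
  rw [key]
  refine Submodule.add_mem _ (Submodule.add_mem _ (Submodule.add_mem _ ?_ ?_) ?_) ?_
  · exact FA.memF (FA.F_mul (m+n) 0 _ hg _ (FA.memTop _)) (by omega)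
  · exact FA.memF (FA.F_mul m n _ hda _ (FA.exp_one_mem hn hb)) (by omega)
  · exact FA.memF (FA.F_mul n m _ (FA.exp_one_mem hn ha') _ hdb) (by omega)
  · exact FA.memF (FA.F_mul 0 (m+n) _ (FA.memTop _) _ hh) (by omega)

end CompleteFilteredAlgebra

namespace CompleteFilteredAlgebra

section Main

variable {K A : Type*} [Field K] [CharZero K] [Ring A] [Algebra K A]
variable (FA : CompleteFilteredAlgebra K A) (lam : K) (R : A →ₗ[K] A)

/-- `W c = exp(R c) * exp(R̃ c)`. -/
noncomputable def Wmap (c : A) : A :=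
  FA.exp (R c) * FA.exp (-(lam • c) - R c)

/-- The fixed-point iteration sequence. -/
noncomputable def seqA (x : A) : ℕ → A
  | 0 => x
  | (k+1) => seqA x k + lam⁻¹ • (Wmap FA lam R (seqA x k) - FA.exp (-(lam • x)))

variable {FA lam R}
variable (hRfil : ∀ n : ℕ, ∀ x ∈ FA.F n, R x ∈ FA.F n)

include hRfil

lemma Rt_mem {n : ℕ} {c : A} (hc : c ∈ FA.F n) : -(lam • c) - R c ∈ FA.F n :=
  Submodule.sub_mem _ (Submodule.neg_mem _ (Submodule.smul_mem _ _ hc)) (hRfil n c hc)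

lemma Wsub {n m : ℕ} (hn : 1 ≤ n) (hnm : n ≤ m) {c c' : A}
    (hc : c ∈ FA.F n) (hc' : c' ∈ FA.F n) (hd : c - c' ∈ FA.F m) :
    Wmap FA lam R c - Wmap FA lam R c' + lam • (c - c') ∈ FA.F (m + n) := by
  have ha : R c ∈ FA.F n := hRfil n c hc
  have ha' : R c' ∈ FA.F n := hRfil n c' hc'
  have hb : -(lam • c) - R c ∈ FA.F n := Rt_mem hRfil hc
  have hb' : -(lam • c') - R c' ∈ FA.F n := Rt_mem hRfil hc'
  have hda : R c - R c' ∈ FA.F m := by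
    rw [← map_sub]; exact hRfil m _ hd
  have hdb : (-(lam • c) - R c) - (-(lam • c') - R c') ∈ FA.F m := by
    have : (-(lam • c) - R c) - (-(lam • c') - R c') = -(lam • (c - c')) - R (c - c') := by
      rw [map_sub, smul_sub]; abel
    rw [this]
    exact Submodule.sub_mem _ (Submodule.neg_mem _ (Submodule.smul_mem _ _ hd)) (hRfil m _ hd)
  have h := FA.prod_diff_est hn hnm ha ha' hb hb' hda hdb
  have key : Wmap FA lam R c - Wmap FA lam R c' + lam • (c - c')
      = FA.exp (R c) * FA.exp (-(lam • c) - R c)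
        - FA.exp (R c') * FA.exp (-(lam • c') - R c')
        - (R c - R c') - ((-(lam • c) - R c) - (-(lam • c') - R c')) := by
    simp only [Wmap, smul_sub]; abel
  rw [key]; exact h

lemma Wbase {n : ℕ} (hn : 1 ≤ n) {x : A} (hx : x ∈ FA.F n) :
    Wmap FA lam R x - FA.exp (-(lam • x)) ∈ FA.F (2 * n) := by
  have ha : R x ∈ FA.F n := hRfil n x hx
  have hb : -(lam • x) - R x ∈ FA.F n := Rt_mem hRfil hx
  have h1 := FA.prod_est hn ha hb
  have h2 := FA.exp_one_est hn (Submodule.neg_mem _ (Submodule.smul_mem _ lam hx))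
  have key : Wmap FA lam R x - FA.exp (-(lam • x))
      = (FA.exp (R x) * FA.exp (-(lam • x) - R x) - 1 - R x - (-(lam • x) - R x))
        - (FA.exp (-(lam • x)) - 1 - (-(lam • x))) := by
    simp only [Wmap]; abel
  rw [key]
  exact Submodule.sub_mem _ h1 h2

lemma seq_est (hlam : lam ≠ 0) {n : ℕ} (hn : 1 ≤ n) {x : A} (hx : x ∈ FA.F n) :
    ∀ k : ℕ, (seqA FA lam R x k - x ∈ FA.F (2 * n)) ∧
      (seqA FA lam R x (k+1) - seqA FA lam R x k ∈ FA.F (n * (k+2))) := by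
  intro k
  induction k with
  | zero =>
    constructor
    · simp only [seqA, sub_self]; exact Submodule.zero_mem _
    · have h1 : seqA FA lam R x 1 - seqA FA lam R x 0
          = lam⁻¹ • (Wmap FA lam R x - FA.exp (-(lam • x))) := by
        simp [seqA]
      rw [h1]
      exact FA.memF (Submodule.smul_mem _ _ (Wbase hRfil hn hx)) (le_of_eq (by ring))
  | succ k ih =>
    obtain ⟨h1, h2⟩ := ih
    have hck : seqA FA lam R x k ∈ FA.F n := by
      have : seqA FA lam R x k = (seqA FA lam R x k - x) + x := by abel
      rw [this]
      exact Submodule.add_mem _ (FA.memF h1 (by omega)) hx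
    have h1' : seqA FA lam R x (k+1) - x ∈ FA.F (2 * n) := by
      have : seqA FA lam R x (k+1) - x
          = (seqA FA lam R x (k+1) - seqA FA lam R x k) + (seqA FA lam R x k - x) := by abel
      rw [this]
      exact Submodule.add_mem _ (FA.memF h2 (by nlinarith)) h1
    have hck1 : seqA FA lam R x (k+1) ∈ FA.F n := by
      have : seqA FA lam R x (k+1) = (seqA FA lam R x (k+1) - x) + x := by abel
      rw [this]
      exact Submodule.add_mem _ (FA.memF h1' (by omega)) hx
    refine ⟨h1', ?_⟩
    have hd' : lam • (seqA FA lam R x (k+1) - seqA FA lam R x k)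
        = Wmap FA lam R (seqA FA lam R x k) - FA.exp (-(lam • x)) := by
      have : seqA FA lam R x (k+1) - seqA FA lam R x k
          = lam⁻¹ • (Wmap FA lam R (seqA FA lam R x k) - FA.exp (-(lam • x))) := by
        simp [seqA]
      rw [this, smul_inv_smul₀ hlam]
    have hW := Wsub (lam := lam) hRfil hn (show n ≤ n * (k+2) by nlinarith) hck1 hck h2
    have e : Wmap FA lam R (seqA FA lam R x (k+1)) - Wmap FA lam R (seqA FA lam R x k)
        + lam • (seqA FA lam R x (k+1) - seqA FA lam R x k)
        = Wmap FA lam R (seqA FA lam R x (k+1)) - FA.exp (-(lam • x)) := by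
      rw [hd']; abel
    rw [e] at hW
    have hstep : seqA FA lam R x (k+2) - seqA FA lam R x (k+1)
        = lam⁻¹ • (Wmap FA lam R (seqA FA lam R x (k+1)) - FA.exp (-(lam • x))) := by
      simp [seqA]
    rw [hstep]
    exact FA.memF (Submodule.smul_mem _ _ hW) (le_of_eq (by ring))

lemma key_exists (hlam : lam ≠ 0) {x : A} (hx : x ∈ FA.F 1) :
    ∃ c ∈ FA.F 1, Wmap FA lam R c = FA.exp (-(lam • x)) ∧
      ∀ n : ℕ, 1 ≤ n → x ∈ FA.F n → c - x ∈ FA.F (2 * n) := by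
  set b : ℕ → A := fun j => match j with
    | 0 => x
    | (j+1) => seqA FA lam R x (j+1) - seqA FA lam R x j with hbdef
  have hb : ∀ N, b N ∈ FA.F N := by
    intro N
    cases N with
    | zero => exact FA.memTop _
    | succ j =>
      have := (seq_est hRfil hlam le_rfl hx j).2
      exact FA.memF this (by omega)
  have hps : ∀ N, ∑ j ∈ Finset.range (N+1), b j = seqA FA lam R x N := by
    intro N
    induction N with
    | zero => simp [hbdef, seqA]
    | succ N ih =>
      rw [Finset.sum_range_succ, ih]
      show seqA FA lam R x N + (seqA FA lam R x (N+1) - seqA FA lam R x N) = _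
      abel
  obtain ⟨s, hs⟩ := FA.F_complete b hb
  have hs' : ∀ N, s - seqA FA lam R x N ∈ FA.F (N+1) := by
    intro N
    have := hs (N+1)
    rwa [hps N] at this
  have hs1 : s ∈ FA.F 1 := by
    have h0 := hs' 0
    have : s = (s - seqA FA lam R x 0) + x := by
      show s = (s - x) + x; abel
    rw [this]
    exact Submodule.add_mem _ h0 hx
  refine ⟨s, hs1, ?_, ?_⟩
  · -- W s = exp (-(lam • x))
    apply FA.sub_sep
    intro N
    have hseqN : seqA FA lam R x N ∈ FA.F 1 := by
      have := (seq_est hRfil hlam le_rfl hx N).1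
      have e : seqA FA lam R x N = (seqA FA lam R x N - x) + x := by abel
      rw [e]
      exact Submodule.add_mem _ (FA.memF this (by omega)) hx
    have hW := Wsub (lam := lam) hRfil le_rfl (show (1:ℕ) ≤ N + 1 by omega) hs1 hseqN (hs' N)
    have hDk : Wmap FA lam R (seqA FA lam R x N) - FA.exp (-(lam • x))
        = lam • (seqA FA lam R x (N+1) - seqA FA lam R x N) := by
      have : seqA FA lam R x (N+1) - seqA FA lam R x N
          = lam⁻¹ • (Wmap FA lam R (seqA FA lam R x N) - FA.exp (-(lam • x))) := by
        simp [seqA]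
      rw [this, smul_inv_smul₀ hlam]
    have hDkmem : Wmap FA lam R (seqA FA lam R x N) - FA.exp (-(lam • x)) ∈ FA.F N := by
      rw [hDk]
      exact FA.memF (Submodule.smul_mem _ _ (seq_est hRfil hlam le_rfl hx N).2) (by omega)
    have key : Wmap FA lam R s - FA.exp (-(lam • x))
        = (Wmap FA lam R s - Wmap FA lam R (seqA FA lam R x N)
            + lam • (s - seqA FA lam R x N))
          - lam • (s - seqA FA lam R x N)
          + (Wmap FA lam R (seqA FA lam R x N) - FA.exp (-(lam • x))) := by abel
    rw [key]
    refine Submodule.add_mem _ (Submodule.sub_mem _ ?_ ?_) hDkmem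
    · exact FA.memF hW (by omega)
    · exact FA.memF (Submodule.smul_mem _ _ (hs' N)) (by omega)
  · -- estimate
    intro n hn hxn
    have h1 := hs' (2*n)
    have h2 := (seq_est hRfil hlam hn hxn (2*n)).1
    have key : s - x = (s - seqA FA lam R x (2*n)) + (seqA FA lam R x (2*n) - x) := by abel
    rw [key]
    exact Submodule.add_mem _ (FA.memF h1 (by omega)) h2

lemma key_unique (hlam : lam ≠ 0) {c c' : A} (hc : c ∈ FA.F 1) (hc' : c' ∈ FA.F 1)
    (h : Wmap FA lam R c = Wmap FA lam R c') : c = c' := by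
  apply FA.sub_sep
  have H : ∀ m : ℕ, c - c' ∈ FA.F (m + 1) := by
    intro m
    induction m with
    | zero => exact Submodule.sub_mem _ hc hc'
    | succ m ih =>
      have hW := Wsub (lam := lam) hRfil le_rfl (show (1:ℕ) ≤ m + 1 by omega) hc hc' ih
      have e : Wmap FA lam R c - Wmap FA lam R c' + lam • (c - c') = lam • (c - c') := by
        rw [h]; abel
      rw [e] at hW
      have : c - c' = lam⁻¹ • (lam • (c - c')) := by rw [inv_smul_smul₀ hlam]
      rw [this]
      exact FA.memF (Submodule.smul_mem _ _ hW) (by omega)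
  intro n
  cases n with
  | zero => exact FA.memTop _
  | succ m => exact H m

end Main

end CompleteFilteredAlgebra

/-- For a complete filtered Rota–Baxter algebra `(A, R)` of weight `lam ≠ 0`
over a field `K` of characteristic zero, with `R̃ := -lam • id - R`, there is a unique map
`χ_lam : A₁ → A₁` with `(χ_lam - id)(Aₙ) ⊆ A₂ₙ` for all `n ≥ 1` and
`exp(R(χ_lam x)) * exp(R̃(χ_lam x)) = exp(-lam • x)` for all `x ∈ A₁`. -/
theorem weighted_bch_recursion_exists_unique {K A : Type*} [Field K] [CharZero K]
    [Ring A] [Algebra K A] (FA : CompleteFilteredAlgebra K A) (lam : K) (hlam : lam ≠ 0)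
    (R : A →ₗ[K] A)
    (hRfil : ∀ n : ℕ, ∀ x ∈ FA.F n, R x ∈ FA.F n)
    (hRB : ∀ x y : A, R x * R y = R (R x * y + x * R y + lam • (x * y))) :
    ∃! χ : FA.F 1 → FA.F 1,
      (∀ n : ℕ, 1 ≤ n → ∀ x : FA.F 1, (x : A) ∈ FA.F n →
        ((χ x : A) - (x : A)) ∈ FA.F (2 * n)) ∧
      (∀ x : FA.F 1,
        FA.exp (R (χ x)) * FA.exp (-(lam • (χ x : A)) - R (χ x)) =
          FA.exp (-(lam • (x : A)))) := by
  have key : ∀ x : FA.F 1, ∃ c ∈ FA.F 1,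
      CompleteFilteredAlgebra.Wmap FA lam R c = FA.exp (-(lam • (x : A))) ∧
      ∀ n : ℕ, 1 ≤ n → (x : A) ∈ FA.F n → c - (x : A) ∈ FA.F (2 * n) := fun x =>
    CompleteFilteredAlgebra.key_exists hRfil hlam x.2
  choose c h using key
  refine ⟨fun x => ⟨c x, (h x).1⟩, ⟨?_, ?_⟩, ?_⟩
  · intro n hn x hxn
    exact (h x).2.2 n hn hxn
  · intro x
    exact (h x).2.1
  · rintro χ' ⟨hχ'1, hχ'2⟩
    funext x
    apply Subtype.ext
    refine CompleteFilteredAlgebra.key_unique hRfil hlam (χ' x).2 (h x).1 ?_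
    show CompleteFilteredAlgebra.Wmap FA lam R (χ' x) = CompleteFilteredAlgebra.Wmap FA lam R (c x)
    rw [(h x).2.1]
    exact hχ'2 x
end
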